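/- Let sinc(z) = sin(z)/z for z ≠ 0 with sinc(0) = 1, and φ₁(z) = (3/2)sinc(z) − (1/2)cos(z). Then φ₁(z) − 1 = O(z⁴) as z → 0; more precisely, (φ₁(z) − 1)/z⁴ → −1/120 as z → 0. -/

import Mathlib

open Filter Topology Asymptotics

/-- sinc(z) = sin(z)/z for z ≠ 0, with sinc(0) = 1. -/
noncomputable def sinc (z : ℝ) : ℝ := if z = 0 then 1 else Real.sin z / z

/-- The first temporal filter function φ₁(z) = (3/2)sinc(z) − (1/2)cos(z). -/
noncomputable def phi1 (z : ℝ) : ℝ := (3 / 2) * sinc z - (1 / 2) * Real.cos z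

/-!
Writing `rem z = 2z (φ₁(z) − 1 + z⁴/120) = 3 sin z − z cos z − 2z + z⁵/60`, the third derivative
of `rem` is `z (z − sin z) = O(z⁴)`. Integrating three times from `0`, where `rem` and its first two
derivatives vanish, gives `rem z = o(z⁵)`, that is `φ₁(z) = 1 − z⁴/120 + o(z⁴)`.
-/

theorem isLittleO_pow_succ_of_hasDerivAt {E : Type*} [NormedAddCommGroup E] [NormedSpace ℝ E]
    {f f' : ℝ → E} {x₀ : ℝ} {n : ℕ} (hf : ∀ x, HasDerivAt f (f' x) x) (hx₀ : f x₀ = 0)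
    (hf' : f' =o[𝓝 x₀] fun x ↦ (x - x₀) ^ n) :
    f =o[𝓝 x₀] fun x ↦ (x - x₀) ^ (n + 1) := by
  simpa [hx₀] using convex_univ.isLittleO_pow_succ_real (Set.mem_univ x₀)
    (fun x _ ↦ (hf x).hasDerivWithinAt) (by simpa using hf')

namespace Phi1

noncomputable def rem (z : ℝ) : ℝ := 3 * Real.sin z - z * Real.cos z - 2 * z + z ^ 5 / 60

noncomputable def rem' (z : ℝ) : ℝ := 2 * Real.cos z + z * Real.sin z - 2 + z ^ 4 / 12

noncomputable def rem'' (z : ℝ) : ℝ := -Real.sin z + z * Real.cos z + z ^ 3 / 3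

noncomputable def rem''' (z : ℝ) : ℝ := z ^ 2 - z * Real.sin z

theorem hasDerivAt_rem (x : ℝ) : HasDerivAt rem (rem' x) x := by
  have := ((((Real.hasDerivAt_sin x).const_mul 3).sub ((hasDerivAt_id' x).mul
    (Real.hasDerivAt_cos x))).sub ((hasDerivAt_id' x).const_mul 2)).add
    ((hasDerivAt_pow 5 x).div_const 60)
  exact this.congr_deriv (by rw [rem']; ring)

theorem hasDerivAt_rem' (x : ℝ) : HasDerivAt rem' (rem'' x) x := by
  have := ((((Real.hasDerivAt_cos x).const_mul 2).add ((hasDerivAt_id' x).mul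
    (Real.hasDerivAt_sin x))).sub_const 2).add ((hasDerivAt_pow 4 x).div_const 12)
  exact this.congr_deriv (by rw [rem'']; ring)

theorem hasDerivAt_rem'' (x : ℝ) : HasDerivAt rem'' (rem''' x) x := by
  have := ((Real.hasDerivAt_sin x).neg.add ((hasDerivAt_id' x).mul
    (Real.hasDerivAt_cos x))).add ((hasDerivAt_pow 3 x).div_const 3)
  exact this.congr_deriv (by rw [rem''']; ring)

theorem rem'''_isBigO : rem''' =O[𝓝 0] fun z ↦ z ^ 4 := by
  refine IsBigO.of_bound 1 (Eventually.of_forall fun z ↦ ?_)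
  have hsin := Real.abs_sub_sin_le z
  calc ‖rem''' z‖ = |z| * |z - Real.sin z| := by
        rw [rem''', Real.norm_eq_abs, ← abs_mul]; ring_nf
    _ ≤ |z| * (|z| ^ 3 / 6) := by gcongr
    _ ≤ 1 * ‖z ^ 4‖ := by
        rw [norm_pow, Real.norm_eq_abs]; nlinarith [pow_nonneg (abs_nonneg z) 4]

theorem rem_isLittleO : rem =o[𝓝 0] fun z ↦ z ^ 5 := by
  have h3 : rem''' =o[𝓝 0] fun z ↦ (z - 0) ^ 2 := by
    simpa using rem'''_isBigO.trans_isLittleO (isLittleO_pow_pow (by norm_num))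
  have h2 := isLittleO_pow_succ_of_hasDerivAt hasDerivAt_rem'' (by simp [rem'']) h3
  have h1 := isLittleO_pow_succ_of_hasDerivAt hasDerivAt_rem' (by simp [rem']) h2
  simpa using isLittleO_pow_succ_of_hasDerivAt hasDerivAt_rem (by simp [rem]) h1

-- At `z = 0` both sides vanish, the right one because `x / 0 = 0`.
theorem phi1_sub_one_add_eq (z : ℝ) : phi1 z - 1 + z ^ 4 / 120 = rem z / (2 * z) := by
  rcases eq_or_ne z 0 with rfl | hz
  · norm_num [phi1, sinc]
  · simp only [phi1, sinc, if_neg hz, rem]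
    field_simp
    ring

end Phi1

theorem phi1_sub_one_add_isLittleO :
    (fun z ↦ phi1 z - 1 + z ^ 4 / 120) =o[𝓝 0] fun z ↦ z ^ 4 := by
  simp_rw [Phi1.phi1_sub_one_add_eq, div_eq_mul_inv]
  have hinv : (fun z : ℝ ↦ (2 * z)⁻¹) =O[𝓝 0] fun z ↦ z⁻¹ :=
    (isBigO_const_mul_self 2⁻¹ _ _).congr_left fun z ↦ (mul_inv 2 z).symm
  refine (Phi1.rem_isLittleO.mul_isBigO hinv).congr_right fun z ↦ ?_
  rcases eq_or_ne z 0 with rfl | hz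
  · simp
  · field_simp

/-- φ₁(z) − 1 = O(z⁴) as z → 0; more precisely, (φ₁(z) − 1)/z⁴ → −1/120 as z → 0. -/
theorem phi1_sub_one_isBigO_and_limit :
    (fun z : ℝ => phi1 z - 1) =O[𝓝 (0 : ℝ)] (fun z : ℝ => z ^ 4) ∧
    Tendsto (fun z : ℝ => (phi1 z - 1) / z ^ 4) (𝓝[≠] (0 : ℝ)) (𝓝 (-1 / 120)) := by
  have h := phi1_sub_one_add_isLittleO
  constructor
  · have := h.isBigO.sub (isBigO_const_mul_self (1 / 120 : ℝ) (fun z : ℝ ↦ z ^ 4) _)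
    exact this.congr_left fun z ↦ by ring
  · have hlim : Tendsto (fun z ↦ (phi1 z - 1 + z ^ 4 / 120) / z ^ 4) (𝓝[≠] 0) (𝓝 0) :=
      h.tendsto_div_nhds_zero.mono_left nhdsWithin_le_nhds
    have := hlim.sub_const (1 / 120)
    rw [zero_sub, ← neg_div] at this
    refine this.congr' ?_
    filter_upwards [self_mem_nhdsWithin] with z (hz : z ≠ 0)
    field_simp
    ring
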